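/- Let Z : 𝕂 × 𝕂 → A_X be a differentiable cotranslation with infinitesimal generator A(u) := ∂₂Z(u, 0), and define Ψ(u, v) := Z(v, u − v). Then: (i) Ψ(u, v) ∘ Ψ(v, w) = Ψ(u, w) for all u, v, w; (ii) ∂_u Ψ(u, v) = A(u) ∘ Ψ(u, v); (iii) ∂_v Ψ(u, v) = −Ψ(u, v) ∘ A(v); and (iv) for every ξ ∈ X, the map u ↦ Ψ(u, v)(ξ) solves the differential equation x'(u) = A(u) x(u) with x(v) = ξ. -/

import Mathlib

/-!
Specialising the cotranslation identity at `r = w`, `s = v - w`, `t = u - v` gives the cocycle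
law `Ψ(u,v) Ψ(v,w) = Ψ(u,w)`, and at `t = s = 0` it gives `Z(r,0) = 1`. Writing
`Z(r,t) = Z(s+r, t-s) Z(r,s)` shows that differentiability at `t = 0` already yields
`∂₂Z(r,s) = A(s+r) Z(r,s)`, which is (ii). Since `Ψ(v,·)` is a left inverse of `Ψ(·,v)` and
`Ψ(v,v) = 1`, the derivative of `v' ↦ Ψ(v,v')` at `v` is `-A(v)`; the cocycle law
`Ψ(u,v') = Ψ(u,v) Ψ(v,v')` then gives (iii). The inverse is differentiated directly from
`f - 1 = -f (g - 1)` for `f g = 1`, not through the Neumann series, which would need `X` complete.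
-/

open Filter Topology

section Cotranslation

variable {G M : Type*} [AddCommGroup G]

def IsCotranslation [Mul M] (Z : G → G → M) : Prop :=
  ∀ r s t, Z r (t + s) = Z (s + r) t * Z r s

def evolution (Z : G → G → M) (u v : G) : M :=
  Z v (u - v)

namespace IsCotranslation

variable {Z : G → G → M}

theorem evolution_mul [Mul M] (hZ : IsCotranslation Z) (u v w : G) :
    evolution Z u v * evolution Z v w = evolution Z u w := by
  have h := hZ w (v - w) (u - v)
  rw [sub_add_sub_cancel, sub_add_cancel] at h
  exact h.symm

theorem apply_zero [Monoid M] [IsLeftCancelMul M] (hZ : IsCotranslation Z) (r : G) :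
    Z r 0 = 1 := by
  have h := hZ r 0 0
  rw [add_zero, zero_add] at h
  exact mul_eq_left.mp h.symm

theorem evolution_self [Monoid M] [IsLeftCancelMul M] (hZ : IsCotranslation Z) (v : G) :
    evolution Z v v = 1 := by
  rw [evolution, sub_self, hZ.apply_zero]

end IsCotranslation

end Cotranslation

section InverseDerivative

variable {R : Type*} [NormedRing R]

theorem norm_sub_one_le_of_mul_eq_one {a b : R} (hab : a * b = 1) (hb : ‖b - 1‖ ≤ 1 / 2) :
    ‖a - 1‖ ≤ 2 * ‖b - 1‖ := by
  have key : a - 1 = -((a - 1) * (b - 1) + (b - 1)) := by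
    rw [sub_mul, one_mul, mul_sub, mul_one, hab]; abel
  have : ‖a - 1‖ ≤ ‖a - 1‖ * ‖b - 1‖ + ‖b - 1‖ :=
    calc ‖a - 1‖ = ‖(a - 1) * (b - 1) + (b - 1)‖ := (congrArg norm key).trans (norm_neg _)
      _ ≤ ‖(a - 1) * (b - 1)‖ + ‖b - 1‖ := norm_add_le _ _
      _ ≤ ‖a - 1‖ * ‖b - 1‖ + ‖b - 1‖ := by gcongr; exact norm_mul_le _ _
  nlinarith [norm_nonneg (a - 1)]

theorem tendsto_nhds_one_of_mul_eq_one {α : Type*} {l : Filter α} {f g : α → R}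
    (hfg : ∀ᶠ x in l, f x * g x = 1) (hg : Tendsto g l (𝓝 1)) : Tendsto f l (𝓝 1) := by
  have hg0 : Tendsto (fun x => ‖g x - 1‖) l (𝓝 0) := by
    simpa using (hg.sub_const 1).norm
  have hsmall : ∀ᶠ x in l, ‖g x - 1‖ ≤ 1 / 2 := hg0.eventually_le_const (by norm_num)
  rw [← tendsto_sub_nhds_zero_iff]
  refine squeeze_zero_norm' ?_ (by simpa using hg0.const_mul 2)
  filter_upwards [hfg, hsmall] with x hx hx' using norm_sub_one_le_of_mul_eq_one hx hx'

variable {𝕜 : Type*} [NontriviallyNormedField 𝕜] [NormedAlgebra 𝕜 R]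

theorem HasDerivAt.of_mul_eq_one {f g : 𝕜 → R} {g' : R} {x : 𝕜}
    (hfg : ∀ t, f t * g t = 1) (hgx : g x = 1) (hg : HasDerivAt g g' x) :
    HasDerivAt f (-g') x := by
  have hfx : f x = 1 := by simpa [hgx] using hfg x
  have hf : Tendsto f (𝓝[≠] x) (𝓝 1) :=
    tendsto_nhdsWithin_of_tendsto_nhds <|
      tendsto_nhds_one_of_mul_eq_one (.of_forall hfg) (hgx ▸ hg.continuousAt.tendsto)
  have hslope : slope f x = fun t => -(f t * slope g x t) := by
    ext t
    have : f t - 1 = -(f t * (g t - 1)) := by rw [mul_sub, hfg, mul_one, neg_sub]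
    rw [slope_def_module, slope_def_module, hfx, hgx, this, mul_smul_comm, smul_neg]
  rw [hasDerivAt_iff_tendsto_slope, hslope]
  simpa using (hf.mul (hasDerivAt_iff_tendsto_slope.mp hg)).neg

end InverseDerivative

namespace IsCotranslation

variable {𝕜 R : Type*} [NontriviallyNormedField 𝕜] [NormedRing R] [NormedAlgebra 𝕜 R]
  {Z : 𝕜 → 𝕜 → R} {A : 𝕜 → R}

theorem hasDerivAt (hZ : IsCotranslation Z) (hA : ∀ r, HasDerivAt (Z r) (A r) 0) (r s : 𝕜) :
    HasDerivAt (Z r) (A (s + r) * Z r s) s := by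
  have hshift : HasDerivAt (fun t => Z (s + r) (t - s)) (A (s + r)) s :=
    .comp_sub_const s s (by simpa using hA (s + r))
  convert hshift.mul_const (Z r s) using 1
  ext t
  rw [← hZ r s (t - s), sub_add_cancel]

theorem hasDerivAt_evolution_left (hZ : IsCotranslation Z) (hA : ∀ r, HasDerivAt (Z r) (A r) 0)
    (u v : 𝕜) : HasDerivAt (fun u' => evolution Z u' v) (A u * evolution Z u v) u := by
  have h := (hZ.hasDerivAt hA v (u - v)).comp_sub_const u v
  rwa [sub_add_cancel] at h

theorem hasDerivAt_evolution_right (hZ : IsCotranslation Z) (hA : ∀ r, HasDerivAt (Z r) (A r) 0)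
    (hZ₀ : ∀ r, Z r 0 = 1) (u v : 𝕜) :
    HasDerivAt (fun v' => evolution Z u v') (-(evolution Z u v * A v)) v := by
  have hself : ∀ w, evolution Z w w = 1 := fun w => by rw [evolution, sub_self, hZ₀]
  have hinv : HasDerivAt (fun v' => evolution Z v v') (-A v) v := by
    refine .of_mul_eq_one (g := fun v' => evolution Z v' v) (fun t => ?_) (hself v) ?_
    · rw [hZ.evolution_mul, hself]
    · simpa [hself] using hZ.hasDerivAt_evolution_left hA v v
  rw [← mul_neg]
  convert hinv.const_mul (evolution Z u v) using 1
  ext v'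
  rw [hZ.evolution_mul]

end IsCotranslation

/-- Properties of the evolution operator `Ψ(u,v) := Z(v, u − v)` of a differentiable
cotranslation `Z` with infinitesimal generator `A(u) := ∂₂Z(u,0)`. -/
theorem stmt_12 {𝕂 X : Type*} [RCLike 𝕂] [NormedAddCommGroup X] [NormedSpace 𝕂 X]
    (Z : 𝕂 → 𝕂 → (X ≃L[𝕂] X))
    (hZ : ∀ r s t : 𝕂, Z r (t + s) = Z (s + r) t * Z r s)
    (D : 𝕂 → 𝕂 → (X →L[𝕂] X))
    (hD : ∀ r t : 𝕂, HasDerivAt (fun s => ((Z r s : X →L[𝕂] X))) (D r t) t)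
    (A : 𝕂 → (X →L[𝕂] X)) (hA : ∀ u : 𝕂, A u = D u 0)
    (Ψ : 𝕂 → 𝕂 → (X ≃L[𝕂] X)) (hΨ : ∀ u v : 𝕂, Ψ u v = Z v (u - v)) :
    (∀ u v w : 𝕂, Ψ u v * Ψ v w = Ψ u w) ∧
    (∀ u v : 𝕂, HasDerivAt (fun u' => ((Ψ u' v : X →L[𝕂] X)))
      ((A u).comp ((Ψ u v : X →L[𝕂] X))) u) ∧
    (∀ u v : 𝕂, HasDerivAt (fun v' => ((Ψ u v' : X →L[𝕂] X)))
      (-(((Ψ u v : X →L[𝕂] X)).comp (A v))) v) ∧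
    (∀ (v : 𝕂) (ξ : X), (Ψ v v) ξ = ξ ∧
      ∀ u : 𝕂, HasDerivAt (fun u' => (Ψ u' v) ξ) ((A u) ((Ψ u v) ξ)) u) := by
  obtain rfl : Ψ = evolution Z := funext₂ hΨ
  replace hZ : IsCotranslation Z := hZ
  set z : 𝕂 → 𝕂 → (X →L[𝕂] X) := fun r s => Z r s
  have hz : IsCotranslation z := fun r s t => by simp only [z, hZ r s t]; rfl
  have hzA : ∀ r, HasDerivAt (z r) (A r) 0 := fun r => hA r ▸ hD r 0
  have hz₀ : ∀ r, z r 0 = 1 := fun r => by simp only [z, hZ.apply_zero]; rfl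
  have hleft := hz.hasDerivAt_evolution_left hzA
  refine ⟨hZ.evolution_mul, hleft, hz.hasDerivAt_evolution_right hzA hz₀, fun v ξ => ⟨?_, ?_⟩⟩
  · rw [hZ.evolution_self]; rfl
  · exact fun u => ((hleft u v).clm_apply (hasDerivAt_const u ξ)).congr_deriv (by simp; rfl)
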